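/- Let (G, ℐ, ≻) be a matroid-constrained matching instance in which preferences are strict rankings. Then there exists a strongly popular set of at most two ℐ-constrained matchings in G. -/

import Mathlib

open scoped Classical

/-- A matching in a bipartite graph with agent set `A`, object set `O` and adjacency
relation `adj`, represented by the partial assignment `M : A → Option O` of objects to
agents: matched pairs are edges, and each object is matched to at most one agent. -/
def IsMatching {A O : Type*} (adj : A → O → Prop) (M : A → Option O) : Prop :=
  (∀ a o, M a = some o → adj a o) ∧
  (∀ a a' o, M a = some o → M a' = some o → a = a')

/-- The lifted strict preference of agent `a` over matchings: `M ≻ₐ N` iff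
`M(a) ≻ₐ N(a)`, where any assigned object is preferred to being unmatched. -/
def PrefM {A O : Type*} (pref : A → O → O → Prop) (a : A) (M N : A → Option O) : Prop :=
  (∃ o o', M a = some o ∧ N a = some o' ∧ pref a o o') ∨
  (∃ o, M a = some o ∧ N a = none)

/-- `pref a` is a strict partial order on the objects adjacent to `a`. -/
def IsPrefOrder {A O : Type*} (adj : A → O → Prop) (pref : A → O → O → Prop) : Prop :=
  ∀ a : A, (∀ o, ¬ pref a o o) ∧
    (∀ o o' o'', pref a o o' → pref a o' o'' → pref a o o'') ∧
    (∀ o o', pref a o o' → adj a o ∧ adj a o')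

/-- Preferences are strict rankings: each `pref a` is a strict linear order on the
objects adjacent to `a`. -/
def IsStrictRanking {A O : Type*} (adj : A → O → Prop) (pref : A → O → O → Prop) : Prop :=
  IsPrefOrder adj pref ∧
  ∀ a o o', adj a o → adj a o' → o ≠ o' → pref a o o' ∨ pref a o' o

/-- `φ(ℳ, N)`: the number of agents preferring some member of `ℳ` to `N`. -/
noncomputable def phiSet {A O : Type*} (pref : A → O → O → Prop)
    (Mset : Set (A → Option O)) (N : A → Option O) : ℕ :=
  {a : A | ∃ M ∈ Mset, PrefM pref a M N}.ncard

/-- `φ(N, ℳ)`: the number of agents preferring `N` to every member of `ℳ`. -/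
noncomputable def phiOne {A O : Type*} (pref : A → O → O → Prop)
    (N : A → Option O) (Mset : Set (A → Option O)) : ℕ :=
  {a : A | ∀ M ∈ Mset, PrefM pref a N M}.ncard

/-- `Mset` is popular (weakly Condorcet-winning) among the feasible matchings `F`:
`μ(ℳ, N) ≥ 0`, i.e. `φ(N, ℳ) ≤ φ(ℳ, N)`, for every feasible `N`. -/
def Popular {A O : Type*} (pref : A → O → O → Prop) (F : Set (A → Option O))
    (Mset : Set (A → Option O)) : Prop :=
  ∀ N ∈ F, phiOne pref N Mset ≤ phiSet pref Mset N

/-- `Mset` is strongly popular (Condorcet-winning) among the feasible matchings `F`: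
`μ(ℳ, N) > 0` for every feasible `N ∉ ℳ`. -/
def StronglyPopular {A O : Type*} (pref : A → O → O → Prop) (F : Set (A → Option O))
    (Mset : Set (A → Option O)) : Prop :=
  ∀ N ∈ F, N ∉ Mset → phiOne pref N Mset < phiSet pref Mset N

/-- The set `M(A)` of objects matched to agents. -/
def matchedObjs {A O : Type*} (M : A → Option O) : Set O := {o | ∃ a, M a = some o}

/-- A matching is `ℐ`-constrained if the set of matched objects is independent. -/
def IsConstrained {A O : Type*} (adj : A → O → Prop) (Mat : Matroid O)
    (M : A → Option O) : Prop :=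
  IsMatching adj M ∧ Mat.Indep (matchedObjs M)

/-!
Serve the agents one at a time in a fixed order, keeping two independent sets (two copies of
the matroid). Each agent takes its favourite adjacent object that can still be added to one of
the copies, using the first copy whenever possible. The two copies give matchings `M₁`, `M₂`;
as every agent holds at most one object in total, the votes against `{M₁, M₂}` are the votes
against their union `D`.

Let `N` be feasible, `P` the agents preferring `N` to `D`, `Q` those preferring `D`, and `z` the
last agent of `P`. The object `N` gives to an agent of `P` was spanned by both copies when that
agent was served. So, in each copy, the `N`-objects of `P` and of the earlier agents on which
`N` agrees with that copy form an independent set spanned by that copy before `z`; hence `|P|`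
is at most the number of agents before `z` in that copy on which `N` and `D` differ. Summing
over the copies gives `2|P| ≤ |P| + |Q| - 1`. If `P = ∅` and no agent prefers `D`, then `N = D`,
and an independent `D` never needs the second copy, so `N = M₁`.
-/

section

variable {A O : Type*}

section PrefM

variable {adj : A → O → Prop} {pref : A → O → O → Prop} {a : A} {M M' N N' : A → Option O}

theorem prefM_congr (hM : M a = M' a) (hN : N a = N' a) :
    PrefM pref a M N ↔ PrefM pref a M' N' := by
  simp only [PrefM, hM, hN]

theorem not_prefM_of_eq_none (h : M a = none) : ¬ PrefM pref a M N := by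
  simp [PrefM, h]

theorem prefM_iff_of_eq_none (h : N a = none) : PrefM pref a M N ↔ ∃ o, M a = some o := by
  simp [PrefM, h]

theorem PrefM.exists_eq_some (h : PrefM pref a M N) : ∃ o, M a = some o := by
  rcases h with ⟨o, -, ho, -⟩ | ⟨o, ho, -⟩ <;> exact ⟨o, ho⟩

theorem PrefM.ne [Std.Irrefl (pref a)] (h : PrefM pref a M N) : M a ≠ N a := by
  rintro hMN
  rcases h with ⟨o, o', ho, ho', h⟩ | ⟨o, ho, ho'⟩ <;> rw [hMN, ho'] at ho <;> cases ho
  exact irrefl _ h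

theorem prefM_or_prefM_of_ne
    (htotal : ∀ o o', adj a o → adj a o' → o ≠ o' → pref a o o' ∨ pref a o' o)
    (hM : ∀ o, M a = some o → adj a o) (hN : ∀ o, N a = some o → adj a o) (hMN : M a ≠ N a) :
    PrefM pref a M N ∨ PrefM pref a N M := by
  rcases hMa : M a with _ | o <;> rcases hNa : N a with _ | o'
  · simp_all
  · exact Or.inr (Or.inr ⟨o', hNa, hMa⟩)
  · exact Or.inl (Or.inr ⟨o, hMa, hNa⟩)
  · have hne : o ≠ o' := fun h => hMN (by rw [hMa, hNa, h])
    rcases htotal o o' (hM o hMa) (hN o' hNa) hne with h | h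
    · exact Or.inl (Or.inl ⟨o, o', hMa, hNa, h⟩)
    · exact Or.inr (Or.inl ⟨o', o, hNa, hMa, h⟩)

end PrefM

section Split

variable {pref : A → O → O → Prop} {M₁ M₂ M : A → Option O}

theorem phiSet_pair_of_split (hsplit : ∀ a, M₁ a = M a ∧ M₂ a = none ∨ M₂ a = M a ∧ M₁ a = none)
    (N : A → Option O) : phiSet pref {M₁, M₂} N = phiSet pref {M} N := by
  unfold phiSet
  congr 1
  ext a
  simp only [Set.mem_ofPred_eq, Set.mem_insert_iff, Set.mem_singleton_iff, exists_eq_or_imp,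
    exists_eq_left]
  rcases hsplit a with ⟨h₁, h₂⟩ | ⟨h₂, h₁⟩
  · simp [prefM_congr h₁ rfl, not_prefM_of_eq_none h₂]
  · simp [prefM_congr h₂ rfl, not_prefM_of_eq_none h₁]

theorem phiOne_pair_of_split (hsplit : ∀ a, M₁ a = M a ∧ M₂ a = none ∨ M₂ a = M a ∧ M₁ a = none)
    (N : A → Option O) : phiOne pref N {M₁, M₂} = phiOne pref N {M} := by
  unfold phiOne
  congr 1
  ext a
  simp only [Set.mem_ofPred_eq, Set.mem_insert_iff, Set.mem_singleton_iff, forall_eq_or_imp,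
    forall_eq]
  rcases hsplit a with ⟨h₁, h₂⟩ | ⟨h₂, h₁⟩
  · rw [prefM_congr rfl h₁, prefM_iff_of_eq_none h₂]
    exact ⟨fun h => h.1, fun h => ⟨h, h.exists_eq_some⟩⟩
  · rw [prefM_congr rfl h₂, prefM_iff_of_eq_none h₁]
    exact ⟨fun h => h.2, fun h => ⟨h.exists_eq_some, h⟩⟩

end Split

theorem Matroid.Indep.ncard_le_of_subset_closure {M : Matroid O} {I Y : Set O} (hI : M.Indep I)
    (hY : M.Indep Y) (hYfin : Y.Finite) (hIY : I ⊆ M.closure Y) : I.ncard ≤ Y.ncard := by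
  have h : I.encard ≤ Y.encard :=
    calc I.encard ≤ M.eRk (M.closure Y) := hI.encard_le_eRk_of_subset hIY
      _ = Y.encard := by rw [M.eRk_closure_eq, hY.eRk_eq_encard]
  have hIfin : I.Finite := Set.encard_lt_top_iff.1 (h.trans_lt hYfin.encard_lt_top)
  rwa [← Nat.cast_le (α := ℕ∞), hIfin.cast_ncard_eq, hYfin.cast_ncard_eq]

theorem ncard_setOf_exists_mem_eq_some {f : A → Option O}
    (hf : ∀ a a' o, f a = some o → f a' = some o → a = a') {S : Set A}
    (hS : ∀ a ∈ S, ∃ o, f a = some o) : {o | ∃ a ∈ S, f a = some o}.ncard = S.ncard := by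
  have hsome : ∀ a ∈ S, (f a).isSome := fun a ha => Option.isSome_iff_exists.2 (hS a ha)
  refine (Set.ncard_congr (t := {o | ∃ a ∈ S, f a = some o})
    (fun a ha => (f a).get (hsome a ha)) (fun a ha => ⟨a, ha, by simp⟩)
    (fun a a' ha ha' h => hf a a' ((f a).get (hsome a ha)) (by simp) (by rw [h]; simp)) ?_).symm
  rintro o ⟨a, ha, hfa⟩
  exact ⟨a, ha, by simp [hfa]⟩

/-- `X b` is the current content of copy `b` of the matroid, `true` being the first copy; `c` is
the object and copy taken by agent `a`. -/
def IsGreedyChoice (M : Matroid O) (adj : A → O → Prop) (pref : A → O → O → Prop) (a : A)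
    (X : Bool → Set O) (c : Option (O × Bool)) : Prop :=
  (∀ o b, c = some (o, b) →
    adj a o ∧ o ∈ M.E \ M.closure (X b) ∧ (b = false → o ∈ M.closure (X true))) ∧
  ∀ u b, adj a u → u ∈ M.E \ M.closure (X b) → ∃ o b', c = some (o, b') ∧ ¬ pref a u o

theorem exists_isGreedyChoice [Finite O] (M : Matroid O) (adj : A → O → Prop)
    (pref : A → O → O → Prop) (a : A) [IsStrictOrder O (pref a)] (X : Bool → Set O) :
    ∃ c, IsGreedyChoice M adj pref a X c := by
  by_cases h : ∃ u b, adj a u ∧ u ∈ M.E \ M.closure (X b)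
  · obtain ⟨o, ⟨b, hadj, hob⟩, hbest⟩ := (Finite.wellFounded_of_trans_of_irrefl (pref a)).has_min
      {u | ∃ b, adj a u ∧ u ∈ M.E \ M.closure (X b)} (by simpa [Set.Nonempty] using h)
    refine ⟨some (o, decide (o ∉ M.closure (X true))), ?_, fun u b' hu hub' => ?_⟩
    · rintro o' b'' hc
      obtain ⟨rfl, rfl⟩ := Prod.mk.inj (Option.some.inj hc)
      by_cases hcl : o ∈ M.closure (X true)
      · cases b <;> simp_all
      · simp_all
    · exact ⟨o, _, rfl, hbest u ⟨b', hu, hub'⟩⟩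
  · exact ⟨none, by simp, fun u b hu hub => (h ⟨u, b, hu, hub⟩).elim⟩

def assignedBefore (D : A → Option (O × Bool)) (ι : A → ℕ) (b : Bool) (k : ℕ) : Set O :=
  {o | ∃ c, ι c < k ∧ D c = some (o, b)}

theorem assignedBefore_mono (D : A → Option (O × Bool)) (ι : A → ℕ) (b : Bool) {k l : ℕ}
    (hkl : k ≤ l) : assignedBefore D ι b k ⊆ assignedBefore D ι b l :=
  fun _ ⟨c, hc, hDc⟩ => ⟨c, hc.trans_le hkl, hDc⟩

noncomputable def greedyAssign (M : Matroid O) (adj : A → O → Prop) (pref : A → O → O → Prop)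
    (ι : A ↪ ℕ) (a : A) : Option (O × Bool) :=
  -- The proof `ι c < ι a` is bound so that the recursive call is visibly decreasing.
  Classical.epsilon <| IsGreedyChoice M adj pref a fun b =>
    {o | ∃ c, ∃ _ : ι c < ι a, greedyAssign M adj pref ι c = some (o, b)}
termination_by ι a

theorem isGreedyChoice_greedyAssign [Finite O] (M : Matroid O) (adj : A → O → Prop)
    (pref : A → O → O → Prop) [∀ a, IsStrictOrder O (pref a)] (ι : A ↪ ℕ) (a : A) :
    IsGreedyChoice M adj pref a (fun b => assignedBefore (greedyAssign M adj pref ι) ι b (ι a))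
      (greedyAssign M adj pref ι a) := by
  rw [greedyAssign]
  simp only [exists_prop]
  exact Classical.epsilon_spec (exists_isGreedyChoice M adj pref a _)

def copyMatching (D : A → Option (O × Bool)) (b : Bool) (a : A) : Option O :=
  (D a).bind fun p => if p.2 = b then some p.1 else none

def combinedMatching (D : A → Option (O × Bool)) (a : A) : Option O :=
  (D a).map Prod.fst

@[simp]
theorem copyMatching_eq_some {D : A → Option (O × Bool)} {b : Bool} {a : A} {o : O} :
    copyMatching D b a = some o ↔ D a = some (o, b) := by
  rcases h : D a with _ | ⟨o', b'⟩ <;> simp [copyMatching, h, and_comm]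

theorem copyMatching_split (D : A → Option (O × Bool)) (a : A) :
    copyMatching D true a = combinedMatching D a ∧ copyMatching D false a = none ∨
      copyMatching D false a = combinedMatching D a ∧ copyMatching D true a = none := by
  rcases h : D a with _ | ⟨o, _ | _⟩ <;> simp [copyMatching, combinedMatching, h]

section Greedy

variable [Finite O] (M : Matroid O) (adj : A → O → Prop) (pref : A → O → O → Prop)
  [∀ a, IsStrictOrder O (pref a)] (ι : A ↪ ℕ)

local notation "D" => greedyAssign M adj pref ι

theorem greedyAssign_spec {a : A} {o : O} {b : Bool} (h : D a = some (o, b)) :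
    adj a o ∧ o ∈ M.E \ M.closure (assignedBefore D ι b (ι a)) ∧
      (b = false → o ∈ M.closure (assignedBefore D ι true (ι a))) :=
  (isGreedyChoice_greedyAssign M adj pref ι a).1 o b h

theorem assignedBefore_subset_ground (b : Bool) (k : ℕ) : assignedBefore D ι b k ⊆ M.E :=
  fun _ ⟨_, _, hc⟩ => (greedyAssign_spec M adj pref ι hc).2.1.1

theorem notMem_assignedBefore_self {a : A} {o : O} {b : Bool} (h : D a = some (o, b)) :
    o ∉ assignedBefore D ι b (ι a) := fun ho =>
  (greedyAssign_spec M adj pref ι h).2.1.2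
    (M.subset_closure _ (assignedBefore_subset_ground M adj pref ι b _) ho)

theorem greedyAssign_injective {a a' : A} {o : O} {b : Bool} (h : D a = some (o, b))
    (h' : D a' = some (o, b)) : a = a' := by
  by_contra hne
  rcases lt_or_gt_of_ne (ι.injective.ne hne) with hlt | hlt
  · exact notMem_assignedBefore_self M adj pref ι h' ⟨a, hlt, h⟩
  · exact notMem_assignedBefore_self M adj pref ι h ⟨a', hlt, h'⟩

theorem indep_assignedBefore (b : Bool) (k : ℕ) : M.Indep (assignedBefore D ι b k) := by
  induction k with
  | zero => simp [assignedBefore]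
  | succ k ih =>
    by_cases hk : ∃ a o, ι a = k ∧ D a = some (o, b)
    · obtain ⟨a, o, rfl, ha⟩ := hk
      have hins : M.Indep (insert o (assignedBefore D ι b (ι a))) :=
        (ih.insert_indep_iff_of_notMem (notMem_assignedBefore_self M adj pref ι ha)).2
          (greedyAssign_spec M adj pref ι ha).2.1
      refine hins.subset fun o' ⟨c, hc, hDc⟩ => ?_
      rcases Nat.lt_succ_iff_lt_or_eq.1 hc with hc | hc
      · exact Or.inr ⟨c, hc, hDc⟩
      · obtain rfl := ι.injective hc
        exact Or.inl (Prod.mk.inj (Option.some.inj (hDc.symm.trans ha))).1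
    · refine ih.subset fun o' ⟨c, hc, hDc⟩ => ⟨c, ?_, hDc⟩
      rcases Nat.lt_succ_iff_lt_or_eq.1 hc with hc | hc
      · exact hc
      · exact (hk ⟨c, o', hc, hDc⟩).elim

theorem isConstrained_copyMatching [Finite A] (b : Bool) :
    IsConstrained adj M (copyMatching D b) := by
  obtain ⟨K, hK⟩ := (Set.finite_range ι).bddAbove
  refine ⟨⟨fun a o h => ?_, fun a a' o h h' => ?_⟩, ?_⟩
  · exact (greedyAssign_spec M adj pref ι (copyMatching_eq_some.1 h)).1
  · exact greedyAssign_injective M adj pref ι (copyMatching_eq_some.1 h)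
      (copyMatching_eq_some.1 h')
  · refine (indep_assignedBefore M adj pref ι b (K + 1)).subset fun o ⟨a, ha⟩ => ?_
    exact ⟨a, Nat.lt_succ_of_le (hK ⟨a, rfl⟩), copyMatching_eq_some.1 ha⟩

end Greedy

section Popularity

variable [Finite O] {M : Matroid O} {adj : A → O → Prop} {pref : A → O → O → Prop}
  [∀ a, IsStrictOrder O (pref a)] {ι : A ↪ ℕ} {N : A → Option O}

local notation "D" => greedyAssign M adj pref ι

theorem adj_of_combinedMatching_eq_some {a : A} {o : O} (h : combinedMatching D a = some o) :
    adj a o := by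
  obtain ⟨⟨o, b⟩, hD, rfl⟩ := Option.map_eq_some_iff.1 h
  exact (greedyAssign_spec M adj pref ι hD).1

theorem mem_closure_of_prefM {a : A} {u : O} (hNa : N a = some u) (hadj : adj a u)
    (huE : u ∈ M.E) (hP : PrefM pref a N (combinedMatching D)) (b : Bool) :
    u ∈ M.closure (assignedBefore D ι b (ι a)) := by
  by_contra hu
  obtain ⟨o, b', hD, hbest⟩ := (isGreedyChoice_greedyAssign M adj pref ι a).2 u b hadj ⟨huE, hu⟩
  rcases hP with ⟨u', o', hu', ho', h⟩ | ⟨u', -, ho'⟩ <;> simp [combinedMatching, hD] at ho'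
  rw [hNa] at hu'
  cases hu'
  exact hbest (ho' ▸ h)

theorem copy_eq_true_of_isConstrained (hD : IsConstrained adj M (combinedMatching D)) {a : A}
    {o : O} {b : Bool} (h : D a = some (o, b)) : b = true := by
  by_contra hb
  obtain ⟨-, ho, hcl⟩ := greedyAssign_spec M adj pref ι h
  have hDa : combinedMatching D a = some o := by simp [combinedMatching, h]
  have hnotMem : o ∉ assignedBefore D ι true (ι a) := by
    rintro ⟨c, hc, hDc⟩
    have hDc' : combinedMatching D c = some o := by simp [combinedMatching, hDc]
    exact hc.ne (congrArg ι (hD.1.2 c a o hDc' hDa))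
  have hins : M.Indep (insert o (assignedBefore D ι true (ι a))) := by
    refine hD.2.subset (Set.insert_subset ⟨a, hDa⟩ ?_)
    rintro o' ⟨c, -, hDc⟩
    exact ⟨c, by simp [combinedMatching, hDc]⟩
  exact ((indep_assignedBefore M adj pref ι true _).insert_indep_iff_of_notMem hnotMem).1 hins
    |>.2 (hcl (by simpa using hb))

theorem combinedMatching_eq_copyMatching_true (hD : IsConstrained adj M (combinedMatching D)) :
    combinedMatching D = copyMatching D true := by
  funext a
  rcases h : D a with _ | ⟨o, b⟩
  · simp [combinedMatching, copyMatching, h]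
  · obtain rfl := copy_eq_true_of_isConstrained hD h
    simp [combinedMatching, copyMatching, h]

theorem ncard_prefM_le [Finite A] (hN : IsConstrained adj M N) {z : A}
    (hz : ∀ a, PrefM pref a N (combinedMatching D) → ι a ≤ ι z) (b : Bool) :
    {a | PrefM pref a N (combinedMatching D)}.ncard ≤
      ({c | ι c < ι z ∧ ∃ o, D c = some (o, b)} \ {c | N c = combinedMatching D c}).ncard := by
  set P := {a | PrefM pref a N (combinedMatching D)}
  set Ag := {c | ι c < ι z ∧ ∃ o, D c = some (o, b)}
  set Agree := {c | N c = combinedMatching D c}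
  have hdisj : Disjoint P (Ag ∩ Agree) := Set.disjoint_left.2 fun a ha ha' => ha.ne ha'.2
  have hNsome : ∀ a ∈ P ∪ (Ag ∩ Agree), ∃ o, N a = some o := by
    rintro a (ha | ⟨⟨-, o, hD⟩, hagree⟩)
    · exact ha.exists_eq_some
    · exact ⟨o, by simp [hagree.out, combinedMatching, hD]⟩
  have hclosure : {o | ∃ a ∈ P ∪ (Ag ∩ Agree), N a = some o} ⊆
      M.closure (assignedBefore D ι b (ι z)) := by
    rintro u ⟨a, ha | ⟨⟨hlt, o, hD⟩, hagree⟩, hNa⟩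
    · exact M.closure_subset_closure (assignedBefore_mono D ι b (hz a ha))
        (mem_closure_of_prefM hNa (hN.1.1 a u hNa) (hN.2.subset_ground ⟨a, hNa⟩) ha b)
    · obtain rfl : u = o := Option.some.inj <| by
        rw [← hNa, hagree.out]; simp [combinedMatching, hD]
      exact M.subset_closure _ (assignedBefore_subset_ground M adj pref ι b _) ⟨a, hlt, hD⟩
  have hassigned : assignedBefore D ι b (ι z) = {o | ∃ a ∈ Ag, copyMatching D b a = some o} := by
    ext o
    simp only [assignedBefore, Ag, copyMatching_eq_some]
    exact ⟨fun ⟨c, hc, hD⟩ => ⟨c, ⟨hc, o, hD⟩, hD⟩, fun ⟨c, ⟨hc, _⟩, hD⟩ => ⟨c, hc, hD⟩⟩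
  have hindep : M.Indep {o | ∃ a ∈ P ∪ (Ag ∩ Agree), N a = some o} :=
    hN.2.subset fun _ ⟨a, _, hNa⟩ => ⟨a, hNa⟩
  have hcount := calc
    P.ncard + (Ag ∩ Agree).ncard = (P ∪ (Ag ∩ Agree)).ncard := (Set.ncard_union_eq hdisj).symm
    _ = {o | ∃ a ∈ P ∪ (Ag ∩ Agree), N a = some o}.ncard :=
      (ncard_setOf_exists_mem_eq_some hN.1.2 hNsome).symm
    _ ≤ (assignedBefore D ι b (ι z)).ncard :=
      hindep.ncard_le_of_subset_closure (indep_assignedBefore M adj pref ι b _) (Set.toFinite _)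
        hclosure
    _ = Ag.ncard := by
      rw [hassigned]
      exact ncard_setOf_exists_mem_eq_some (isConstrained_copyMatching M adj pref ι b).1.2
        fun a ha => ha.2.imp fun _ => copyMatching_eq_some.2
    _ = (Ag ∩ Agree).ncard + (Ag \ Agree).ncard :=
      (Set.ncard_inter_add_ncard_sdiff_eq_ncard _ _).symm
  omega

theorem ncard_prefM_lt [Finite A]
    (htotal : ∀ a o o', adj a o → adj a o' → o ≠ o' → pref a o o' ∨ pref a o' o)
    (hN : IsConstrained adj M N) (hne : N ≠ copyMatching D true) :
    {a | PrefM pref a N (combinedMatching D)}.ncard <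
      {a | PrefM pref a (combinedMatching D) N}.ncard := by
  set P := {a | PrefM pref a N (combinedMatching D)}
  set Q := {a | PrefM pref a (combinedMatching D) N}
  set Disagree := {a | N a ≠ combinedMatching D a}
  have hPQ : Disagree ⊆ P ∪ Q := fun a ha =>
    prefM_or_prefM_of_ne (htotal a) (hN.1.1 a) (fun _ => adj_of_combinedMatching_eq_some) ha
  rcases P.eq_empty_or_nonempty with hP | hP
  · rw [hP, Set.ncard_empty, Set.ncard_pos]
    by_contra hQ
    have hagree : N = combinedMatching D := funext fun a => by
      by_contra ha
      simpa [hP, Set.not_nonempty_iff_eq_empty.1 hQ] using hPQ ha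
    exact hne (hagree.trans (combinedMatching_eq_copyMatching_true (hagree ▸ hN)))
  obtain ⟨z, hz, hzmax⟩ := Set.exists_max_image P ι P.toFinite hP
  set T : Bool → Set A := fun b =>
    {c | ι c < ι z ∧ ∃ o, D c = some (o, b)} \ {c | N c = combinedMatching D c}
  have hT : T true ∪ T false ⊆ Disagree \ {z} := by
    rintro c (⟨⟨hc, -⟩, hne⟩ | ⟨⟨hc, -⟩, hne⟩) <;> exact ⟨hne, by rintro rfl; exact lt_irrefl _ hc⟩
  have hdisj : Disjoint (T true) (T false) := by
    refine Set.disjoint_left.2 fun c ⟨⟨_, o, ho⟩, _⟩ ⟨⟨_, o', ho'⟩, _⟩ => ?_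
    simp_all
  have hcount : 2 * P.ncard ≤ P.ncard + Q.ncard - 1 := calc
    2 * P.ncard ≤ (T true).ncard + (T false).ncard := by
        have htrue : P.ncard ≤ (T true).ncard := ncard_prefM_le hN hzmax true
        have hfalse : P.ncard ≤ (T false).ncard := ncard_prefM_le hN hzmax false
        omega
    _ = (T true ∪ T false).ncard := (Set.ncard_union_eq hdisj).symm
    _ ≤ (Disagree \ {z}).ncard := Set.ncard_le_ncard hT
    _ = Disagree.ncard - 1 := Set.ncard_sdiff_singleton_of_mem hz.ne
    _ ≤ P.ncard + Q.ncard - 1 := by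
        have := (Set.ncard_le_ncard hPQ).trans (Set.ncard_union_le P Q)
        omega
  have := hP.ncard_pos
  omega

end Popularity

theorem IsPrefOrder.isStrictOrder {adj : A → O → Prop} {pref : A → O → O → Prop}
    (h : IsPrefOrder adj pref) (a : A) : IsStrictOrder O (pref a) where
  irrefl := (h a).1
  trans := (h a).2.1

end

theorem exists_strongly_popular_pair_of_strict_general
    {A O : Type*} [Fintype A] [Fintype O]
    (adj : A → O → Prop) (pref : A → O → O → Prop)
    (hpref : IsStrictRanking adj pref)
    (Mat : Matroid O) :
    ∃ Mset : Set (A → Option O),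
      (∀ M ∈ Mset, IsConstrained adj Mat M) ∧ Mset.ncard ≤ 2 ∧
      StronglyPopular pref {M | IsConstrained adj Mat M} Mset := by
  have := hpref.1.isStrictOrder
  obtain ⟨ι⟩ := nonempty_embedding_nat A
  set D := greedyAssign Mat adj pref ι
  refine ⟨{copyMatching D true, copyMatching D false}, ?_, ?_, fun N hN hNmem => ?_⟩
  · rintro M (rfl | rfl) <;> exact isConstrained_copyMatching Mat adj pref ι _
  · exact (Set.ncard_insert_le _ _).trans (by simp)
  · rw [phiOne_pair_of_split (copyMatching_split D), phiSet_pair_of_split (copyMatching_split D)]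
    simp only [phiOne, phiSet, Set.mem_singleton_iff, forall_eq, exists_eq_left]
    exact ncard_prefM_lt hpref.2 hN fun h => hNmem (Or.inl h)

/-- In a matroid-constrained matching instance with strict rankings,
there exists a strongly popular set of at most two `ℐ`-constrained matchings. -/
theorem exists_strongly_popular_pair_of_strict
    {A O : Type*} [Fintype A] [Fintype O]
    (adj : A → O → Prop) (pref : A → O → O → Prop)
    (hpref : IsStrictRanking adj pref)
    (Mat : Matroid O) (hE : Mat.E = Set.univ) :
    ∃ Mset : Set (A → Option O),
      (∀ M ∈ Mset, IsConstrained adj Mat M) ∧ Mset.ncard ≤ 2 ∧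
      StronglyPopular pref {M | IsConstrained adj Mat M} Mset :=
  exists_strongly_popular_pair_of_strict_general adj pref hpref Mat
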